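/- Under the reduction construction—Ω = S ∪ S̄ ∪ {z} with uniform measure, E = {z}, facts Fᵢ = Aᵢ ∪ (S̄ \ Āᵢ) ∪ {z}, threshold p = 1—there exists a nonempty subset R ⊆ {F₁,…,Fₙ} with π(E | ⋂_{F∈R} F) ≥ 1 if and only if there exists a nonempty I ⊆ {1,…,n} such that ⋂_{i∈I} Aᵢ = ∅ and ⋃_{i∈I} Aᵢ = S. -/

import Mathlib

open Finset

/-- Probability of a finset under the uniform measure on a finite type. -/
def unifP (Ω : Type*) [Fintype Ω] [DecidableEq Ω] (A : Finset Ω) : ℚ :=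
  (A.card : ℚ) / (Fintype.card Ω : ℚ)

/-- Conditional probability `π(E | F) = π(E ∩ F) / π(F)` under the uniform measure. -/
def condP (Ω : Type*) [Fintype Ω] [DecidableEq Ω] (E F : Finset Ω) : ℚ :=
  unifP Ω (E ∩ F) / unifP Ω F

/-!
Since `z` lies in every fact, `π({z} | ⋂ Fᵢ) = 1 / |⋂ Fᵢ|`, so the threshold `1` is reached exactly
when `⋂ Fᵢ = {z}`. And `⋂ Fᵢ` contains `b` iff `b ∈ ⋂ Aᵢ`, and contains `b̄` iff `b ∉ ⋃ Aᵢ`.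
-/

theorem condP_eq_card_div_card {Ω : Type*} [Fintype Ω] [DecidableEq Ω] (E F : Finset Ω) :
    condP Ω E F = ((E ∩ F).card : ℚ) / F.card := by
  rcases F.eq_empty_or_nonempty with rfl | ⟨x, -⟩
  · simp [condP, unifP]
  · have : (Fintype.card Ω : ℚ) ≠ 0 := by exact_mod_cast (Fintype.card_pos_iff.mpr ⟨x⟩).ne'
    exact div_div_div_cancel_right₀ this _ _

theorem one_le_condP_singleton_iff {Ω : Type*} [Fintype Ω] [DecidableEq Ω] {x : Ω}
    {F : Finset Ω} (hx : x ∈ F) : 1 ≤ condP Ω {x} F ↔ F = {x} := by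
  have hF : (0 : ℚ) < F.card := by exact_mod_cast card_pos.mpr ⟨x, hx⟩
  rw [condP_eq_card_div_card, singleton_inter_of_mem hx, card_singleton, Nat.cast_one,
    one_le_div hF, Nat.cast_le_one, card_le_one, eq_singleton_iff_unique_mem]
  exact ⟨fun h => ⟨hx, fun y hy => h y hy x hx⟩,
    fun h a ha b hb => (h.2 a ha).trans (h.2 b hb).symm⟩

section Reduction

variable {β : Type*} [Fintype β] [DecidableEq β]

/-- `Aᵢ ∪ (S̄ \ Āᵢ) ∪ {z}`, encoding `b ∈ S` as `some (b, false)`, `b̄` as `some (b, true)`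
and `z` as `none`. -/
def reductionFact (A : Finset β) : Finset (Option (β × Bool)) :=
  A.image (fun b => some (b, false)) ∪ ((univ \ A).image (fun b => some (b, true))) ∪ {none}

variable {ι : Type*} (I : Finset ι) (A : ι → Finset β)

theorem none_mem_inf_reductionFact : none ∈ I.inf (fun i => reductionFact (A i)) := by
  simp [mem_inf, reductionFact]

theorem some_false_mem_inf_reductionFact_iff (b : β) :
    some (b, false) ∈ I.inf (fun i => reductionFact (A i)) ↔ b ∈ I.inf A := by
  simp [mem_inf, reductionFact]

theorem some_true_mem_inf_reductionFact_iff (b : β) :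
    some (b, true) ∈ I.inf (fun i => reductionFact (A i)) ↔ b ∉ I.sup A := by
  simp [mem_inf, mem_sup, reductionFact]

theorem inf_reductionFact_eq_singleton_none_iff :
    I.inf (fun i => reductionFact (A i)) = {none} ↔ I.inf A = ∅ ∧ I.sup A = univ := by
  rw [eq_singleton_iff_unique_mem, eq_empty_iff_forall_notMem, eq_univ_iff_forall]
  simp only [none_mem_inf_reductionFact, true_and, Option.forall, Prod.forall, Bool.forall_bool,
    reduceCtorEq, imp_false, some_false_mem_inf_reductionFact_iff,
    some_true_mem_inf_reductionFact_iff, not_not, forall_and, imp_self]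

end Reduction

/-- The reduction construction. `S` is a finite set (modeled as `univ` over a
finite type `β`), `Ω = S ⊔ S̄ ⊔ {z}` is modeled as `Option (β × Bool)` with `z = none`,
original elements `some (b, false)` and barred copies `some (b, true)`. Facts are
`F i = A i ∪ (S̄ \ Ā i) ∪ {z}`, the focal event `E = {z}`, the threshold `p = 1`.
There is a nonempty report `I` with `π(E | ⋂_{i∈I} F i) ≥ 1` iff there is a nonempty `I`
with `⋂_{i∈I} A i = ∅` and `⋃_{i∈I} A i = S`. -/
theorem stmt4 (β : Type*) [Fintype β] [DecidableEq β]
    (n : ℕ) (A : Fin n → Finset β)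
    (F : Fin n → Finset (Option (β × Bool)))
    (hF : ∀ i, F i = (A i).image (fun b => some (b, false)) ∪
      ((Finset.univ \ A i).image (fun b => some (b, true))) ∪ {none})
    (E : Finset (Option (β × Bool))) (hE : E = {none}) :
    (∃ I : Finset (Fin n), I.Nonempty ∧ condP (Option (β × Bool)) E (I.inf F) ≥ 1) ↔
    (∃ I : Finset (Fin n), I.Nonempty ∧ I.inf A = ∅ ∧ I.sup A = Finset.univ) := by
  obtain rfl : F = fun i => reductionFact (A i) := funext hF
  subst hE
  refine exists_congr fun I => and_congr_right fun _ => ?_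
  rw [ge_iff_le, one_le_condP_singleton_iff (none_mem_inf_reductionFact I A),
    inf_reductionFact_eq_singleton_none_iff]
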